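/- Combined denoising decomposition: let Ψ = W(I−ηΣ²)ᵗWᵀ with W orthogonal, Σ diagonal nonnegative nonincreasing, η ≤ 1/σ₁². Let x₀ = V_K x̃ with V_K orthonormal columns, suppose there is an orthogonal Q with ‖V_K − W_K Q‖_F ≤ δ, where W_K is the first K columns of W. Then ‖Ψ x₀‖₂ ≤ ((1 − ησ_K²)ᵗ + δ(1 − ησ_N²)ᵗ)‖x₀‖₂. -/
import Mathlib


open Matrix Finset

/-- Operator (spectral) norm of a real square matrix. -/
noncomputable def opNorm {n : ℕ} (A : Matrix (Fin n) (Fin n) ℝ) : ℝ :=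
  ‖LinearMap.toContinuousLinearMap
      (Matrix.toEuclideanLin A : EuclideanSpace ℝ (Fin n) →ₗ[ℝ] EuclideanSpace ℝ (Fin n))‖

/-- Frobenius norm of a real matrix. -/
noncomputable def frobNorm {m n : ℕ} (A : Matrix (Fin m) (Fin n) ℝ) : ℝ :=
  Real.sqrt (∑ i, ∑ j, (A i j) ^ 2)

/-- Euclidean norm of a real vector. -/
noncomputable def vecNorm {n : ℕ} (x : Fin n → ℝ) : ℝ :=
  Real.sqrt (∑ i, (x i) ^ 2)

lemma vecNorm_eq {n : ℕ} (x : Fin n → ℝ) :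
    vecNorm x = ‖(WithLp.equiv 2 (Fin n → ℝ)).symm x‖ := by
  rw [EuclideanSpace.norm_eq]
  simp [vecNorm, Real.norm_eq_abs, sq_abs]

lemma vecNorm_add_le {n : ℕ} (x y : Fin n → ℝ) :
    vecNorm (x + y) ≤ vecNorm x + vecNorm y := by
  simp only [vecNorm_eq]
  exact norm_add_le ((WithLp.equiv 2 (Fin n → ℝ)).symm x) ((WithLp.equiv 2 (Fin n → ℝ)).symm y)

lemma sum_sq_mulVec {m k : ℕ} (A : Matrix (Fin m) (Fin k) ℝ) (h : Aᵀ * A = 1)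
    (v : Fin k → ℝ) : ∑ i, (A.mulVec v i) ^ 2 = ∑ j, (v j) ^ 2 := by
  have h1 : ∑ i, (A.mulVec v i) ^ 2 = A.mulVec v ⬝ᵥ A.mulVec v := by
    simp [dotProduct, sq]
  have h2 : v ⬝ᵥ (Aᵀ * A).mulVec v = A.mulVec v ⬝ᵥ A.mulVec v := by
    rw [← Matrix.mulVec_mulVec, Matrix.dotProduct_mulVec, Matrix.vecMul_transpose]
  rw [h1, ← h2, h, Matrix.one_mulVec]
  simp [dotProduct, sq]

lemma vecNorm_mulVec_eq {m k : ℕ} (A : Matrix (Fin m) (Fin k) ℝ) (h : Aᵀ * A = 1)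
    (v : Fin k → ℝ) : vecNorm (A.mulVec v) = vecNorm v := by
  unfold vecNorm; rw [sum_sq_mulVec A h v]

lemma vecNorm_mulVec_le_frob {m k : ℕ} (A : Matrix (Fin m) (Fin k) ℝ) (v : Fin k → ℝ) :
    vecNorm (A.mulVec v) ≤ frobNorm A * vecNorm v := by
  unfold vecNorm frobNorm
  rw [← Real.sqrt_mul (by positivity)]
  apply Real.sqrt_le_sqrt
  rw [Finset.sum_mul]
  apply Finset.sum_le_sum
  intro i _
  have := Finset.sum_mul_sq_le_sq_mul_sq Finset.univ (fun j => A i j) v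
  simpa [Matrix.mulVec, dotProduct] using this

lemma psi_part_bound {m : ℕ} (W : Matrix (Fin m) (Fin m) ℝ)
    (hW : Wᵀ * W = 1) (hW' : W * Wᵀ = 1)
    (d : Fin m → ℝ) (c : ℝ) (hc : 0 ≤ c) (x : Fin m → ℝ)
    (h : ∀ i, |d i * (Wᵀ.mulVec x) i| ≤ c * |(Wᵀ.mulVec x) i|) :
    vecNorm ((W * Matrix.diagonal d * Wᵀ).mulVec x) ≤ c * vecNorm x := by
  have hA : (W * Matrix.diagonal d * Wᵀ).mulVec x
      = W.mulVec ((Matrix.diagonal d).mulVec (Wᵀ.mulVec x)) := by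
    rw [Matrix.mulVec_mulVec, Matrix.mulVec_mulVec]
  rw [hA, vecNorm_mulVec_eq W hW]
  set u := Wᵀ.mulVec x with hu
  have hdiag : (Matrix.diagonal d).mulVec u = fun i => d i * u i := by
    ext i; rw [Matrix.mulVec_diagonal]
  rw [hdiag]
  unfold vecNorm
  have hsum : ∑ i, (d i * u i) ^ 2 ≤ ∑ i, c ^ 2 * (u i) ^ 2 := by
    apply Finset.sum_le_sum
    intro i _
    calc (d i * u i) ^ 2 = |d i * u i| ^ 2 := (sq_abs _).symm
      _ ≤ (c * |u i|) ^ 2 := by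
          apply pow_le_pow_left₀ (abs_nonneg _) (h i)
      _ = c ^ 2 * (u i) ^ 2 := by rw [mul_pow, sq_abs]
  calc Real.sqrt (∑ i, (d i * u i) ^ 2) ≤ Real.sqrt (∑ i, c ^ 2 * (u i) ^ 2) :=
        Real.sqrt_le_sqrt hsum
    _ = c * Real.sqrt (∑ i, (u i) ^ 2) := by
        rw [← Finset.mul_sum, Real.sqrt_mul (sq_nonneg c), Real.sqrt_sq hc]
    _ = c * Real.sqrt (∑ i, (x i) ^ 2) := by
        rw [hu, sum_sq_mulVec Wᵀ (by rwa [Matrix.transpose_transpose]) x]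

/-- Combined denoising decomposition: with `Ψ = W(I−ηΣ²)ᵗWᵀ`,
`x₀ = V_K x̃` bandlimited, and `‖V_K − W_K Q‖_F ≤ δ`,
`‖Ψ x₀‖₂ ≤ ((1 − ησ_K²)ᵗ + δ(1 − ησ_N²)ᵗ) ‖x₀‖₂`. -/
theorem Psi_bandlimited_bound {n K : ℕ} (hK0 : 0 < K) (hK : K ≤ n + 1)
    (W : Matrix (Fin (n + 1)) (Fin (n + 1)) ℝ) (σ : Fin (n + 1) → ℝ)
    (η : ℝ) (t : ℕ)
    (VK : Matrix (Fin (n + 1)) (Fin K) ℝ) (Q : Matrix (Fin K) (Fin K) ℝ)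
    (xt : Fin K → ℝ) (δ : ℝ)
    (hW : Wᵀ * W = 1) (hW' : W * Wᵀ = 1)
    (hmono : ∀ i j : Fin (n + 1), i ≤ j → σ j ≤ σ i)
    (hnn : ∀ i, 0 ≤ σ i) (hη : 0 < η) (hη1 : η * (σ 0) ^ 2 ≤ 1)
    (hVK : VKᵀ * VK = 1) (hQ : Qᵀ * Q = 1) (hδ : 0 ≤ δ)
    (hclose : frobNorm (VK - (W.submatrix id (Fin.castLE hK)) * Q) ≤ δ) :
    vecNorm ((W * Matrix.diagonal (fun i => (1 - η * (σ i) ^ 2) ^ t) * Wᵀ).mulVec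
        (VK.mulVec xt))
      ≤ ((1 - η * (σ ⟨K - 1, by omega⟩) ^ 2) ^ t + δ * (1 - η * (σ (Fin.last n)) ^ 2) ^ t)
          * vecNorm (VK.mulVec xt) := by
  set d : Fin (n + 1) → ℝ := fun i => (1 - η * (σ i) ^ 2) ^ t with hd
  set WK : Matrix (Fin (n + 1)) (Fin K) ℝ := W.submatrix id (Fin.castLE hK) with hWK
  set E : Matrix (Fin (n + 1)) (Fin K) ℝ := VK - WK * Q with hE
  set Ψ : Matrix (Fin (n + 1)) (Fin (n + 1)) ℝ := W * Matrix.diagonal d * Wᵀ with hΨ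
  -- basic facts about d
  have hbase : ∀ i, 0 ≤ 1 - η * (σ i) ^ 2 := by
    intro i
    have h1 : σ i ≤ σ 0 := hmono 0 i (Fin.zero_le i)
    have h2 : (σ i) ^ 2 ≤ (σ 0) ^ 2 := pow_le_pow_left₀ (hnn i) h1 2
    have h3 : η * (σ i) ^ 2 ≤ η * (σ 0) ^ 2 := mul_le_mul_of_nonneg_left h2 hη.le
    linarith
  have hdnn : ∀ i, 0 ≤ d i := fun i => pow_nonneg (hbase i) t
  have hdmono : ∀ i j : Fin (n + 1), i ≤ j → d i ≤ d j := by
    intro i j hij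
    have h1 : σ j ≤ σ i := hmono i j hij
    have h2 : (σ j) ^ 2 ≤ (σ i) ^ 2 := pow_le_pow_left₀ (hnn j) h1 2
    have h3 : η * (σ j) ^ 2 ≤ η * (σ i) ^ 2 := mul_le_mul_of_nonneg_left h2 hη.le
    exact pow_le_pow_left₀ (hbase i) (by linarith) t
  set c1 : ℝ := d ⟨K - 1, by omega⟩ with hc1
  set c2 : ℝ := d (Fin.last n) with hc2
  have hc1nn : 0 ≤ c1 := hdnn _
  have hc2nn : 0 ≤ c2 := hdnn _
  -- decompose x₀
  have hsumE : WK * Q + E = VK := by rw [hE]; abel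
  have hdecomp : VK.mulVec xt = (WK * Q).mulVec xt + E.mulVec xt := by
    rw [← hsumE, Matrix.add_mulVec]
  -- WK has orthonormal columns
  have hWKortho : WKᵀ * WK = 1 := by
    ext j j'
    have : (WKᵀ * WK) j j' = (Wᵀ * W) (Fin.castLE hK j) (Fin.castLE hK j') := by
      simp [Matrix.mul_apply, hWK, Matrix.submatrix_apply]
    rw [this, hW]
    by_cases h : j = j'
    · subst h; simp [Matrix.one_apply]
    · rw [Matrix.one_apply_ne (fun hc => h (Fin.castLE_injective hK hc)),
        Matrix.one_apply_ne h]
  have hWKQortho : (WK * Q)ᵀ * (WK * Q) = 1 := by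
    rw [Matrix.transpose_mul, Matrix.mul_assoc, ← Matrix.mul_assoc WKᵀ, hWKortho,
      Matrix.one_mul, hQ]
  -- coordinates of a := (WK * Q).mulVec xt vanish beyond K
  have hvanish : ∀ i : Fin (n + 1), K ≤ i.val → Wᵀ.mulVec ((WK * Q).mulVec xt) i = 0 := by
    intro i hi
    rw [Matrix.mulVec_mulVec, ← Matrix.mul_assoc]
    have hrow : ∀ j, (Wᵀ * WK * Q) i j = 0 := by
      intro j
      rw [Matrix.mul_apply]
      apply Finset.sum_eq_zero
      intro l _
      have : (Wᵀ * WK) i l = (Wᵀ * W) i (Fin.castLE hK l) := by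
        simp [Matrix.mul_apply, hWK, Matrix.submatrix_apply]
      rw [this, hW, Matrix.one_apply_ne, zero_mul]
      intro hc
      have : i.val = l.val := by rw [hc]; rfl
      omega
    simp [Matrix.mulVec, dotProduct, hrow]
  -- bound on the a-part
  have hbound1 : vecNorm (Ψ.mulVec ((WK * Q).mulVec xt)) ≤ c1 * vecNorm xt := by
    have := psi_part_bound W hW hW' d c1 hc1nn ((WK * Q).mulVec xt) (by
      intro i
      by_cases hi : i.val < K
      · have hile : i ≤ ⟨K - 1, by omega⟩ := by
          rw [Fin.le_def]; simp; omega
        rw [abs_mul, abs_of_nonneg (hdnn i)]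
        exact mul_le_mul_of_nonneg_right (hdmono i _ hile) (abs_nonneg _)
      · rw [hvanish i (by omega)]
        simp)
    calc vecNorm (Ψ.mulVec ((WK * Q).mulVec xt)) ≤ c1 * vecNorm ((WK * Q).mulVec xt) := this
      _ = c1 * vecNorm xt := by rw [vecNorm_mulVec_eq _ hWKQortho]
  -- bound on the b-part
  have hbound2 : vecNorm (Ψ.mulVec (E.mulVec xt)) ≤ c2 * (δ * vecNorm xt) := by
    have hstep : vecNorm (Ψ.mulVec (E.mulVec xt)) ≤ c2 * vecNorm (E.mulVec xt) := by
      apply psi_part_bound W hW hW' d c2 hc2nn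
      intro i
      rw [abs_mul, abs_of_nonneg (hdnn i)]
      exact mul_le_mul_of_nonneg_right (hdmono i (Fin.last n) (Fin.le_last i)) (abs_nonneg _)
    have hfrob : vecNorm (E.mulVec xt) ≤ δ * vecNorm xt := by
      calc vecNorm (E.mulVec xt) ≤ frobNorm E * vecNorm xt := vecNorm_mulVec_le_frob E xt
        _ ≤ δ * vecNorm xt := by
            apply mul_le_mul_of_nonneg_right hclose (Real.sqrt_nonneg _)
    calc vecNorm (Ψ.mulVec (E.mulVec xt)) ≤ c2 * vecNorm (E.mulVec xt) := hstep
      _ ≤ c2 * (δ * vecNorm xt) := mul_le_mul_of_nonneg_left hfrob hc2nn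
  -- assemble
  have hx0 : vecNorm (VK.mulVec xt) = vecNorm xt := vecNorm_mulVec_eq VK hVK xt
  calc vecNorm (Ψ.mulVec (VK.mulVec xt))
      = vecNorm (Ψ.mulVec ((WK * Q).mulVec xt) + Ψ.mulVec (E.mulVec xt)) := by
        rw [hdecomp, Matrix.mulVec_add]
    _ ≤ vecNorm (Ψ.mulVec ((WK * Q).mulVec xt)) + vecNorm (Ψ.mulVec (E.mulVec xt)) :=
        vecNorm_add_le _ _
    _ ≤ c1 * vecNorm xt + c2 * (δ * vecNorm xt) := add_le_add hbound1 hbound2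
    _ = (c1 + δ * c2) * vecNorm (VK.mulVec xt) := by rw [hx0]; ring
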